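/- arXiv:2601.00118 — 5 statements merged into one kernel-verified Lean document; each statement's English description precedes it below -/
import Mathlib

section
/- Let E be a complete lattice. In D(E), the infimum of a family of embedded elements satisfies ⋀_{j∈J} [{A_j}] = [{⋂_{j∈J} A_j}], where ⋂ denotes the infimum computed in E. -/
/-- Nonempty subsets of `P`. -/
def NSet (P : Type*) := {S : Set P // S.Nonempty}

/-- The domination preorder on nonempty subsets. -/
instance NSet.preorder {P : Type*} [Preorder P] : Preorder (NSet P) where
  le S T := ∀ a ∈ S.1, ∃ b ∈ T.1, a ≤ b
  le_refl S a ha := ⟨a, ha, le_refl a⟩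
  le_trans S T U h1 h2 a ha := by
    obtain ⟨b, hb, hab⟩ := h1 a ha
    obtain ⟨c, hc, hbc⟩ := h2 b hb
    exact ⟨c, hc, hab.trans hbc⟩

/-- `D(E)`: the quotient of nonempty subsets by mutual-domination equivalence. -/
abbrev DP (P : Type*) [Preorder P] := Antisymmetrization (NSet P) (· ≤ ·)

/-- The class `[S]` of a nonempty subset `S` in `D(E)`. -/
def cls {P : Type*} [Preorder P] (S : Set P) (h : S.Nonempty) : DP P :=
  toAntisymmetrization (· ≤ ·) (⟨S, h⟩ : NSet P)

lemma cls_le_cls {P : Type*} [Preorder P] {S T : Set P} {hS : S.Nonempty} {hT : T.Nonempty} :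
    cls S hS ≤ cls T hT ↔ ∀ a ∈ S, ∃ b ∈ T, a ≤ b :=
  toAntisymmetrization_le_toAntisymmetrization_iff

/-- In `D(E)` for a complete lattice `E`, the infimum of a family of embedded
elements `[{A_j}]` is `[{⨅ j, A j}]`, the infimum being computed in `E`. -/
theorem DP_iInf_of_embedded {E : Type*} [CompleteLattice E] {J : Type*} (A : J → E) :
    IsGLB (Set.range fun j => cls ({A j} : Set E) (Set.singleton_nonempty _))
      (cls ({⨅ j, A j} : Set E) (Set.singleton_nonempty _)) := by
  constructor
  · rintro x ⟨j, rfl⟩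
    rw [cls_le_cls]
    rintro a rfl
    exact ⟨A j, rfl, iInf_le _ _⟩
  · intro x hx
    induction x using Quotient.ind with
    | _ S =>
      have hS : cls S.1 S.2 = Quotient.mk _ S := rfl
      rw [← hS] at hx ⊢
      rw [cls_le_cls]
      intro a ha
      refine ⟨_, rfl, le_iInf fun j => ?_⟩
      have := hx (Set.mem_range_self j)
      rw [cls_le_cls] at this
      obtain ⟨b, hb, hab⟩ := this a ha
      rw [Set.mem_singleton_iff] at hb
      exact hb ▸ hab
end

section
/- Let E be a complete lattice. In D(E), for any family of classes [S_j] with S_j = {A_j^i : i ∈ I_j} (each I_j nonempty), the infimum is given by ⋀_{j∈J} [S_j] = [ { ⋂_{j∈J} A_j^{f(j)} : f ∈ F } ], where F is the set of choice functions f with f(j) ∈ I_j for all j, and ⋂ is the infimum in E. -/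
/-- In `D(E)` for a complete lattice `E`, the infimum of classes
`[{A_j^i : i ∈ I_j}]` is the class of the set of all infima `⨅ j, A j (f j)`
over choice functions `f`. -/
theorem DP_iInf_choice_formula {E : Type*} [CompleteLattice E] {J : Type*}
    (I : J → Type*) [∀ j, Nonempty (I j)] (A : ∀ j, I j → E) :
    IsGLB (Set.range fun j => cls (Set.range (A j)) (Set.range_nonempty _))
      (cls (Set.range fun f : ∀ j, I j => ⨅ j, A j (f j)) (Set.range_nonempty _)) := by
  constructor
  · rintro x ⟨j, rfl⟩
    rw [cls_le_cls]
    rintro a ⟨f, rfl⟩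
    exact ⟨A j (f j), ⟨f j, rfl⟩, iInf_le _ j⟩
  · intro b hb
    induction b using Quotient.ind with
    | _ T =>
      have hQ : (⟦T⟧ : DP E) = cls T.1 T.2 := rfl
      have hT : ∀ j, ∀ a ∈ T.1, ∃ b ∈ Set.range (A j), a ≤ b := fun j => by
        have := hb ⟨j, rfl⟩; rw [hQ, cls_le_cls] at this; exact this
      rw [hQ, cls_le_cls]
      intro t ht
      have : ∀ j, ∃ i, t ≤ A j i := by
        intro j
        obtain ⟨b, ⟨i, rfl⟩, hle⟩ := hT j t ht
        exact ⟨i, hle⟩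
      choose f hf using this
      exact ⟨⨅ j, A j (f j), ⟨f, rfl⟩, le_iInf hf⟩
end

section
/- A complete lattice satisfies the infinite distributive identity ⋀_{j} ⋁_{i∈I_j} x_j^i = ⋁_{f} ⋀_j x_j^{f(j)} (over all families and choice functions f) if and only if it satisfies the dual identity ⋁_{j} ⋀_{i∈I_j} x_j^i = ⋀_{f} ⋁_j x_j^{f(j)}. -/
universe u

/-- Raney's argument deriving the dual law is `CompletelyDistribLattice.ofMinimalAxioms`. -/
theorem iSup_iInf_eq_of_iInf_iSup_eq {L : Type u} [CompleteLattice L]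
    (h : ∀ (J : Type u) (I : J → Type u) (x : ∀ j, I j → L),
        ⨅ j, ⨆ i, x j i = ⨆ f : ∀ j, I j, ⨅ j, x j (f j))
    (J : Type u) (I : J → Type u) (x : ∀ j, I j → L) :
    ⨆ j, ⨅ i, x j i = ⨅ f : ∀ j, I j, ⨆ j, x j (f j) :=
  letI := CompletelyDistribLattice.ofMinimalAxioms ⟨fun {_ _} x => h _ _ x⟩
  iSup_iInf_eq

/-- Raney's theorem: a complete lattice satisfies the infinite distributive
identity `⋀_j ⋁_{i∈I_j} x_j^i = ⋁_f ⋀_j x_j^{f(j)}` (over all families and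
choice functions) iff it satisfies the dual identity. -/
theorem complete_distributivity_self_dual {L : Type} [CompleteLattice L] :
    (∀ (J : Type) (I : J → Type) (x : ∀ j, I j → L),
        ⨅ j, ⨆ i, x j i = ⨆ f : ∀ j, I j, ⨅ j, x j (f j)) ↔
    (∀ (J : Type) (I : J → Type) (x : ∀ j, I j → L),
        ⨆ j, ⨅ i, x j i = ⨅ f : ∀ j, I j, ⨆ j, x j (f j)) :=
  ⟨iSup_iInf_eq_of_iInf_iSup_eq, iSup_iInf_eq_of_iInf_iSup_eq (L := Lᵒᵈ)⟩
end

section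
/- Let L be an orthocomplemented lattice (bounded lattice with an antitone involution c satisfying a ∧ a^c = 0 and a ∨ a^c = 1). In the completion E_L (the fixed-point lattice of ** on D(L), where [⋁_i a_i]* := ⋀_i [a_i^c]), the canonical inclusion a ↦ [{a}] is an injective homomorphism of orthocomplemented lattices: it preserves finite meets (a ∧ b ↦ [{a}] ∧ [{b}]), finite joins (a ∨ b ↦ [{a}] ∐ [{b}]), bottom, top, and orthocomplement ([{a^c}] = [{a}]*). Moreover, if L is complete, this inclusion is surjective, hence an isomorphism. -/
/-- The `*` operation on `D(L)` in the lower-set model (a class `[⋁_i a_i]`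
is identified with the lower set it generates): `A* = {x | ∀ a ∈ A, x ≤ a^c}`,
which realises `(⋁_i [a_i])* = ⋀_i [a_i^c]`. -/
def lstar {L : Type*} [Preorder L] (oc : L → L) (A : Set L) : Set L :=
  {x | ∀ a ∈ A, x ≤ oc a}

/-- The canonical inclusion `L → D(L)`, `a ↦ [{a}]`, i.e. the principal lower
set `↓a`. -/
def incl {L : Type*} [Preorder L] (a : L) : Set L := Set.Iic a

/-- For an orthocomplemented lattice `L` (with orthocomplement `oc`), the
canonical inclusion of `L` into its completion `E_L` (the `**`-fixed points of
`D(L)`) is an injective homomorphism of orthocomplemented lattices: it lands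
in `E_L`, preserves finite meets, finite joins (`∐` being `(⋁·)**`), bottom,
top and orthocomplement.  Moreover, if `L` is complete, it is surjective onto
`E_L`, hence an isomorphism. -/
theorem completion_inclusion_hom {L : Type*} [Lattice L] [BoundedOrder L]
    (oc : L → L)
    (hanti : ∀ a b : L, a ≤ b → oc b ≤ oc a)
    (hinv : ∀ a : L, oc (oc a) = a)
    (hmeet : ∀ a : L, a ⊓ oc a = ⊥)
    (hjoin : ∀ a : L, a ⊔ oc a = ⊤) :
    Function.Injective (incl (L := L)) ∧
    (∀ a : L, lstar oc (lstar oc (incl a)) = incl a) ∧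
    (∀ a b : L, incl (a ⊓ b) = incl a ∩ incl b) ∧
    (∀ a b : L, lstar oc (lstar oc (incl a ∪ incl b)) = incl (a ⊔ b)) ∧
    (∀ A : Set L, IsLowerSet A → A.Nonempty → incl (⊥ : L) ⊆ A) ∧
    (∀ A : Set L, A ⊆ incl (⊤ : L)) ∧
    (∀ a : L, lstar oc (incl a) = incl (oc a)) ∧
    ((∀ S : Set L, ∃ x, IsLUB S x) →
      ∀ A : Set L, IsLowerSet A → A.Nonempty →
        lstar oc (lstar oc A) = A → ∃ a, A = incl a) := by
  -- basic galois-type fact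
  have hswap : ∀ x b : L, x ≤ oc b ↔ b ≤ oc x := by
    intro x b
    constructor
    · intro h
      have := hanti _ _ h
      rwa [hinv] at this
    · intro h
      have := hanti _ _ h
      rwa [hinv] at this
  have hstar_incl : ∀ a : L, lstar oc (incl a) = incl (oc a) := by
    intro a
    ext x
    constructor
    · intro hx
      exact hx a le_rfl
    · intro hx b hb
      exact le_trans hx (hanti _ _ hb)
  have hdeMorgan : ∀ a b : L, oc (oc a ⊓ oc b) = a ⊔ b := by
    intro a b
    apply le_antisymm
    · have h : oc (a ⊔ b) ≤ oc a ⊓ oc b :=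
        le_inf (hanti _ _ le_sup_left) (hanti _ _ le_sup_right)
      have := hanti _ _ h
      rwa [hinv] at this
    · refine sup_le ?_ ?_
      · rw [hswap]; exact inf_le_left
      · rw [hswap]; exact inf_le_right
  refine ⟨?_, ?_, ?_, ?_, ?_, ?_, hstar_incl, ?_⟩
  · intro a b h
    have ha : a ∈ incl b := h ▸ Set.mem_Iic.2 (le_refl a)
    have hb : b ∈ incl a := h.symm ▸ Set.mem_Iic.2 (le_refl b)
    exact le_antisymm ha hb
  · intro a
    rw [hstar_incl, hstar_incl, hinv]
  · intro a b
    ext x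
    simp [incl, le_inf_iff]
  · intro a b
    have h1 : lstar oc (incl a ∪ incl b) = incl (oc a ⊓ oc b) := by
      ext x
      constructor
      · intro hx
        exact le_inf (hx a (Or.inl le_rfl)) (hx b (Or.inr le_rfl))
      · rintro hx c (hc | hc)
        · exact le_trans (le_trans hx inf_le_left) (hanti _ _ hc)
        · exact le_trans (le_trans hx inf_le_right) (hanti _ _ hc)
    rw [h1, hstar_incl, hdeMorgan]
  · intro A hA ⟨a, ha⟩ x hx
    have : (x : L) = ⊥ := le_antisymm hx bot_le
    exact this ▸ hA bot_le ha
  · intro A x _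
    exact le_top
  · intro hcomp A hA hne hfix
    obtain ⟨s, hs⟩ := hcomp A
    refine ⟨s, ?_⟩
    have h1 : lstar oc A = incl (oc s) := by
      ext y
      simp only [incl, Set.mem_Iic]
      constructor
      · intro hy
        rw [hswap]
        exact hs.2 fun b hb => (hswap y b).1 (hy b hb)
      · intro hy b hb
        rw [hswap]
        exact le_trans (hs.1 hb) ((hswap y s).1 hy)
    rw [← hfix, h1, hstar_incl, hinv]
end

section
/- Let {E_α}_{α∈κ} be a family of orthocomplemented complete lattices, F_κ the lattice of choice functions A : κ → ⋃ E_α with A(α) ∈ E_α (with all functions having some component 0 identified with the constant-0 function), and ⊗_{α∈κ} E_α the fixed-point logic of ** on D(F_κ). Then each map i_α : E_α → ⊗_β E_β, sending a to the function equal to a at α and 1 elsewhere, is an injective homomorphism of orthocomplemented complete lattices: i_α(⋂S) = ⋀ i_α(S), i_α(⋃S) = ∐ i_α(S), i_α(0) = 0, i_α(1) = 1, and i_α(a^c) = i_α(a)* for all a ∈ E_α. -/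
/-- `F_κ`: choice functions `A` with `A α ∈ E α`, where every function having
some component `⊥` is identified with the constant-`⊥` function (so the valid
representatives are the functions with no `⊥` component, together with the
constant-`⊥` function). -/
def FK {κ : Type*} (E : κ → Type*) [∀ α, CompleteLattice (E α)] :=
  {A : ∀ α, E α // (∀ α, A α ≠ ⊥) ∨ (∀ α, A α = ⊥)}

/-- Componentwise (pre)order on `F_κ`. -/
instance FK.preorder {κ : Type*} (E : κ → Type*) [∀ α, CompleteLattice (E α)] :
    Preorder (FK E) where
  le A B := ∀ α, A.1 α ≤ B.1 α
  le_refl A α := le_refl _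
  le_trans A B C h1 h2 α := (h1 α).trans (h2 α)

/-- The bottom element `0̂` of `F_κ`. -/
def botFK {κ : Type*} (E : κ → Type*) [∀ α, CompleteLattice (E α)] : FK E :=
  ⟨fun _ => ⊥, Or.inr fun _ => rfl⟩

open Classical in
/-- `i_α(a)`: the element of `F_κ` equal to `a` at `α` and `1` elsewhere
(which is `0̂` when `a = 0`). -/
noncomputable def iotaFK {κ : Type*} [DecidableEq κ] (E : κ → Type*) [∀ α, CompleteLattice (E α)]
    (hnt : ∀ α, (⊥ : E α) ≠ ⊤) (α : κ) (a : E α) : FK E :=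
  if ha : a = ⊥ then botFK E
  else ⟨Function.update (fun β => (⊤ : E β)) α a, Or.inl fun β => by
    rcases eq_or_ne β α with rfl | hβ
    · rw [Function.update_self]; exact ha
    · rw [Function.update_of_ne hβ]
      exact fun hb => hnt β hb.symm⟩

/-- The `*` operation on `D(F_κ)` in the lower-set model: for a lower set `D`,
`D* = {B | ∀ A ∈ D, ∃ α, B α ≤ (A α)^c}`, which realises
`(⋁_{i∈I} A^i)* = ⋁_{f : I → κ} 𝔸_f`, `𝔸_f(α) = ⋂_{f(i)=α} (A^i(α))^c`. -/
def DstarFK {κ : Type*} (E : κ → Type*) [∀ α, CompleteLattice (E α)]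
    (oc : ∀ α, E α → E α) (D : Set (FK E)) : Set (FK E) :=
  {B | ∀ A ∈ D, ∃ α, B.1 α ≤ oc α (A.1 α)}

/-! Since an element of `F_κ` with a `⊥` coordinate is `0̂`, lying below `i_α(a)` only
constrains the `α`-coordinate. Hence `*` acts on the principal sets `↓i_α(a)` as `oc α` on
the label `a`, and since `*` turns unions into intersections, the supremum formula follows from
de Morgan's law for the involutive antitone `oc α`. -/

namespace Antitone

variable {X : Type*} [CompleteLattice X] {f : X → X}

theorem le_map_comm (hf : Antitone f) (hinv : Function.Involutive f) {a b : X} :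
    a ≤ f b ↔ b ≤ f a :=
  ⟨fun h => hinv b ▸ hf h, fun h => hinv a ▸ hf h⟩

theorem map_bot_of_involutive (hf : Antitone f) (hinv : Function.Involutive f) : f ⊥ = ⊤ :=
  top_le_iff.mp ((hf.le_map_comm hinv).mpr bot_le)

theorem map_top_of_involutive (hf : Antitone f) (hinv : Function.Involutive f) : f ⊤ = ⊥ := by
  rw [← hf.map_bot_of_involutive hinv, hinv]

theorem map_iSup_of_involutive (hf : Antitone f) (hinv : Function.Involutive f)
    {ι : Sort*} (g : ι → X) : f (⨆ i, g i) = ⨅ i, f (g i) :=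
  eq_of_forall_le_iff fun x => by
    rw [le_iInf_iff, hf.le_map_comm hinv, iSup_le_iff]
    exact forall_congr' fun i => hf.le_map_comm hinv

end Antitone

namespace FK

variable {κ : Type*} {E : κ → Type*} [∀ α, CompleteLattice (E α)]

theorem apply_eq_bot_of_apply_eq_bot (A : FK E) {β : κ} (hβ : A.1 β = ⊥) (γ : κ) :
    A.1 γ = ⊥ :=
  A.2.elim (fun h => absurd hβ (h β)) (· γ)

end FK

theorem DstarFK_iUnion {κ : Type*} {E : κ → Type*} [∀ α, CompleteLattice (E α)]
    (oc : ∀ α, E α → E α) {ι : Sort*} (D : ι → Set (FK E)) :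
    DstarFK E oc (⋃ i, D i) = ⋂ i, DstarFK E oc (D i) := by
  ext B
  simp only [DstarFK, Set.mem_iUnion, Set.mem_iInter, Set.mem_ofPred_eq]
  exact ⟨fun h i A hA => h A ⟨i, hA⟩, fun h A ⟨i, hA⟩ => h i A hA⟩

section iotaFK

variable {κ : Type*} [DecidableEq κ] {E : κ → Type*} [∀ α, CompleteLattice (E α)]
  {hnt : ∀ α, (⊥ : E α) ≠ ⊤} {α : κ}

theorem iotaFK_bot : iotaFK E hnt α ⊥ = botFK E := dif_pos rfl

theorem iotaFK_apply_self (a : E α) : (iotaFK E hnt α a).1 α = a := by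
  by_cases ha : a = ⊥
  · simp [iotaFK, botFK, ha]
  · simp [iotaFK, ha]

theorem iotaFK_apply_of_ne {a : E α} (ha : a ≠ ⊥) {β : κ} (hβ : β ≠ α) :
    (iotaFK E hnt α a).1 β = ⊤ := by
  simp [iotaFK, ha, hβ]

theorem le_iotaFK_iff {a : E α} {B : FK E} : B ≤ iotaFK E hnt α a ↔ B.1 α ≤ a := by
  refine ⟨fun h => iotaFK_apply_self (hnt := hnt) a ▸ h α, fun h β => ?_⟩
  by_cases ha : a = ⊥
  · subst ha
    rw [iotaFK_bot]
    exact (B.apply_eq_bot_of_apply_eq_bot (le_bot_iff.mp h) β).le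
  · rcases eq_or_ne β α with rfl | hβ
    · rwa [iotaFK_apply_self]
    · rw [iotaFK_apply_of_ne ha hβ]
      exact le_top

theorem iotaFK_injective : Function.Injective (fun a : E α => Set.Iic (iotaFK E hnt α a)) := by
  intro a b hab
  have hle : ∀ {a b : E α}, Set.Iic (iotaFK E hnt α a) ⊆ Set.Iic (iotaFK E hnt α b) → a ≤ b :=
    fun h => by simpa only [iotaFK_apply_self] using le_iotaFK_iff.mp (h Set.self_mem_Iic)
  exact le_antisymm (hle hab.le) (hle hab.ge)

theorem Iic_iotaFK_top : Set.Iic (iotaFK E hnt α ⊤) = Set.univ :=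
  Set.eq_univ_of_forall fun _ => le_iotaFK_iff.mpr le_top

theorem Iic_iotaFK_iInf {ι : Sort*} (g : ι → E α) :
    Set.Iic (iotaFK E hnt α (⨅ i, g i)) = ⋂ i, Set.Iic (iotaFK E hnt α (g i)) := by
  ext B
  simp only [Set.mem_Iic, Set.mem_iInter, le_iotaFK_iff, le_iInf_iff]

theorem DstarFK_Iic_iotaFK {oc : ∀ α, E α → E α} (hanti : ∀ α, Antitone (oc α))
    (hinv : ∀ α, Function.Involutive (oc α)) (a : E α) :
    DstarFK E oc (Set.Iic (iotaFK E hnt α a)) = Set.Iic (iotaFK E hnt α (oc α a)) := by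
  ext B
  rw [Set.mem_Iic, le_iotaFK_iff]
  refine ⟨fun hB => ?_, fun hB A hA => ⟨α, hB.trans (hanti α (le_iotaFK_iff.mp hA))⟩⟩
  by_cases ha : a = ⊥
  · rw [ha, (hanti α).map_bot_of_involutive (hinv α)]
    exact le_top
  obtain ⟨β, hβ⟩ := hB (iotaFK E hnt α a) Set.self_mem_Iic
  rcases eq_or_ne β α with rfl | hne
  · rwa [iotaFK_apply_self] at hβ
  -- off `α` the generator `iotaFK a` is `⊤`, so `B` has a `⊥` component and is `0̂`
  rw [iotaFK_apply_of_ne ha hne, (hanti β).map_top_of_involutive (hinv β), le_bot_iff] at hβ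
  rw [B.apply_eq_bot_of_apply_eq_bot hβ α]
  exact bot_le

theorem DstarFK_iUnion_Iic_iotaFK {oc : ∀ α, E α → E α} (hanti : ∀ α, Antitone (oc α))
    (hinv : ∀ α, Function.Involutive (oc α)) (S : Set (E α)) :
    DstarFK E oc (⋃ a ∈ S, Set.Iic (iotaFK E hnt α a)) =
      Set.Iic (iotaFK E hnt α (oc α (sSup S))) := by
  simp only [DstarFK_iUnion, DstarFK_Iic_iotaFK hanti hinv, sSup_eq_iSup,
    (hanti α).map_iSup_of_involutive (hinv α), Iic_iotaFK_iInf]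

end iotaFK

theorem iota_logic_embedding_general {κ : Type*} [DecidableEq κ] (E : κ → Type*)
    [∀ α, CompleteLattice (E α)]
    (oc : ∀ α, E α → E α)
    (hanti : ∀ α, ∀ a b : E α, a ≤ b → oc α b ≤ oc α a)
    (hinv : ∀ α, ∀ a : E α, oc α (oc α a) = a)
    (hnt : ∀ α, (⊥ : E α) ≠ ⊤) (α : κ) :
    Function.Injective (fun a : E α => Set.Iic (iotaFK E hnt α a)) ∧
    (∀ a : E α, DstarFK E oc (DstarFK E oc (Set.Iic (iotaFK E hnt α a))) =
        Set.Iic (iotaFK E hnt α a)) ∧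
    (∀ S : Set (E α), Set.Iic (iotaFK E hnt α (sInf S)) =
        ⋂ a ∈ S, Set.Iic (iotaFK E hnt α a)) ∧
    (∀ S : Set (E α), Set.Iic (iotaFK E hnt α (sSup S)) =
        DstarFK E oc (DstarFK E oc (⋃ a ∈ S, Set.Iic (iotaFK E hnt α a)))) ∧
    (Set.Iic (iotaFK E hnt α (⊥ : E α)) = Set.Iic (botFK E)) ∧
    (Set.Iic (iotaFK E hnt α (⊤ : E α)) = (Set.univ : Set (FK E))) ∧
    (∀ a : E α, DstarFK E oc (Set.Iic (iotaFK E hnt α a)) =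
        Set.Iic (iotaFK E hnt α (oc α a))) := by
  have hstar := DstarFK_Iic_iotaFK (hnt := hnt) (α := α) hanti hinv
  refine ⟨iotaFK_injective, fun a => ?_, fun S => ?_, fun S => ?_, by rw [iotaFK_bot],
    Iic_iotaFK_top, hstar⟩
  · rw [hstar, hstar, hinv]
  · simp only [sInf_eq_iInf, Iic_iotaFK_iInf]
  · rw [DstarFK_iUnion_Iic_iotaFK hanti hinv, hstar, hinv]

/-- For a family `{E_α}` of (nondegenerate) orthocomplemented complete
lattices, each canonical map `i_α : E_α → ⊗_β E_β` into the tensor product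
(the `**`-fixed points of `D(F_κ)`, elements being represented by lower sets,
with `a ↦ ↓i_α(a)`) is an injective homomorphism of orthocomplemented complete
lattices: it lands in the tensor product, preserves arbitrary infima and
suprema (`∐S = (⋁S)**`), bottom, top, and orthocomplement
(`i_α(a^c) = i_α(a)*`). -/
theorem iota_logic_embedding {κ : Type*} [DecidableEq κ] (E : κ → Type*)
    [∀ α, CompleteLattice (E α)]
    (oc : ∀ α, E α → E α)
    (hanti : ∀ α, ∀ a b : E α, a ≤ b → oc α b ≤ oc α a)
    (hinv : ∀ α, ∀ a : E α, oc α (oc α a) = a)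
    (hmeet : ∀ α, ∀ a : E α, a ⊓ oc α a = ⊥)
    (hjoin : ∀ α, ∀ a : E α, a ⊔ oc α a = ⊤)
    (hnt : ∀ α, (⊥ : E α) ≠ ⊤) (α : κ) :
    Function.Injective (fun a : E α => Set.Iic (iotaFK E hnt α a)) ∧
    (∀ a : E α, DstarFK E oc (DstarFK E oc (Set.Iic (iotaFK E hnt α a))) =
        Set.Iic (iotaFK E hnt α a)) ∧
    (∀ S : Set (E α), Set.Iic (iotaFK E hnt α (sInf S)) =
        ⋂ a ∈ S, Set.Iic (iotaFK E hnt α a)) ∧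
    (∀ S : Set (E α), Set.Iic (iotaFK E hnt α (sSup S)) =
        DstarFK E oc (DstarFK E oc (⋃ a ∈ S, Set.Iic (iotaFK E hnt α a)))) ∧
    (Set.Iic (iotaFK E hnt α (⊥ : E α)) = Set.Iic (botFK E)) ∧
    (Set.Iic (iotaFK E hnt α (⊤ : E α)) = (Set.univ : Set (FK E))) ∧
    (∀ a : E α, DstarFK E oc (Set.Iic (iotaFK E hnt α a)) =
        Set.Iic (iotaFK E hnt α (oc α a))) :=
  iota_logic_embedding_general E oc hanti hinv hnt α
end
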